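/- arXiv:2508.13362 — 6 statements merged into one kernel-verified Lean document; each statement's English description precedes it below -/
import Mathlib

section
/- Under the ACI-with-radius update rule with initial threshold A_1 = α and the lower-saturation hypothesis, the calibration threshold is bounded below: for every t ≥ 1, A_{t+1} ≥ −η − max_{1 ≤ s ≤ t} δ_s. -/
/-- ACI-with-radius with `A 1 = α` and the lower-saturation hypothesis:
the calibration threshold is bounded below by `-η - max_{1 ≤ s ≤ t} δ s`. -/
theorem aci_lower_bound
    (η α : ℝ) (err A δ : ℕ → ℝ)
    (hη : 0 < η) (hα : α ∈ Set.Icc (0 : ℝ) 1)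
    (hδ : ∀ t, 1 ≤ t → 0 ≤ δ t)
    (herr : ∀ t, 1 ≤ t → err t = 0 ∨ err t = 1)
    (hinit : A 1 = α)
    (hupd : ∀ t, 1 ≤ t → A (t + 1) = A t + η * (α - err t))
    (hlow : ∀ t, 1 ≤ t → A t < -δ t → err t = 0) :
    ∀ t (ht : 1 ≤ t),
      -η - (Finset.Icc 1 t).sup' (Finset.nonempty_Icc.mpr ht) δ ≤ A (t + 1) := by
  obtain ⟨hα0, hα1⟩ := hα
  -- step lemma: bound at time t+1 from bound at time t (or base)
  have step : ∀ t, 1 ≤ t → -δ t - η ≤ A (t + 1) ∨ A t ≤ A (t + 1) := by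
    intro t ht
    rcases herr t ht with h0 | h1
    · right
      rw [hupd t ht, h0]
      nlinarith
    · left
      have hAt : -δ t ≤ A t := by
        by_contra h
        push_neg at h
        have := hlow t ht h
        rw [this] at h1; norm_num at h1
      rw [hupd t ht, h1]
      nlinarith
  intro t ht
  induction t, ht using Nat.le_induction with
  | base =>
    have hs : (Finset.Icc 1 1).sup' (Finset.nonempty_Icc.mpr le_rfl) δ = δ 1 := by
      simp
    rw [hs]
    rcases step 1 le_rfl with h | h
    · linarith
    · rw [hinit] at h
      have := hδ 1 le_rfl
      linarith
  | succ n hn ih =>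
    set M := (Finset.Icc 1 n).sup' (Finset.nonempty_Icc.mpr hn) δ with hM
    have hne : (Finset.Icc 1 (n+1)).Nonempty := Finset.nonempty_Icc.mpr (by omega)
    have hMle : M ≤ (Finset.Icc 1 (n+1)).sup' hne δ := by
      apply Finset.sup'_le
      intro s hs
      apply Finset.le_sup'
      simp at hs ⊢; omega
    have hδle : δ (n+1) ≤ (Finset.Icc 1 (n+1)).sup' hne δ :=
      Finset.le_sup' δ (by simp)
    rcases step (n+1) (by omega) with h | h
    · linarith
    · linarith
end

section
/- Under the ACI-with-radius update rule with initial threshold A_1 = α and the upper-saturation hypothesis, the calibration threshold is bounded above: for every t ≥ 1, A_{t+1} ≤ 1 + η + max_{1 ≤ s ≤ t} δ_s. -/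
/-- ACI-with-radius with `A 1 = α` and the upper-saturation hypothesis:
the calibration threshold is bounded above by `1 + η + max_{1 ≤ s ≤ t} δ s`. -/
theorem aci_upper_bound
    (η α : ℝ) (err A δ : ℕ → ℝ)
    (hη : 0 < η) (hα : α ∈ Set.Icc (0 : ℝ) 1)
    (hδ : ∀ t, 1 ≤ t → 0 ≤ δ t)
    (herr : ∀ t, 1 ≤ t → err t = 0 ∨ err t = 1)
    (hinit : A 1 = α)
    (hupd : ∀ t, 1 ≤ t → A (t + 1) = A t + η * (α - err t))
    (hup : ∀ t, 1 ≤ t → 1 + δ t < A t → err t = 1) :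
    ∀ t (ht : 1 ≤ t),
      A (t + 1) ≤ 1 + η + (Finset.Icc 1 t).sup' (Finset.nonempty_Icc.mpr ht) δ := by
  have herr0 : ∀ t, 1 ≤ t → 0 ≤ err t := by
    intro t ht; rcases herr t ht with h | h <;> rw [h] <;> norm_num
  have hstep : ∀ t, 1 ≤ t → A (t + 1) ≤ A t + η := by
    intro t ht
    rw [hupd t ht]
    have : α - err t ≤ 1 := by
      have := herr0 t ht; have := hα.2; linarith
    nlinarith [hη.le]
  intro t ht
  induction t with
  | zero => omega
  | succ n ih =>
    rcases Nat.eq_or_lt_of_le ht with h1 | h1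
    · -- n + 1 = 1, i.e. n = 0
      have hn : n = 0 := by omega
      subst hn
      have hmem : (1 : ℕ) ∈ Finset.Icc 1 1 := by simp
      have hd : 0 ≤ (Finset.Icc 1 1).sup' (Finset.nonempty_Icc.mpr ht) δ :=
        le_trans (hδ 1 le_rfl) (Finset.le_sup' δ hmem)
      have := hstep 1 le_rfl
      rw [hinit] at this
      linarith [hα.2]
    · have hn : 1 ≤ n := by omega
      have ihn := ih hn
      have hmono : (Finset.Icc 1 n).sup' (Finset.nonempty_Icc.mpr hn) δ ≤
          (Finset.Icc 1 (n+1)).sup' (Finset.nonempty_Icc.mpr ht) δ := by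
        apply Finset.sup'_le
        intro b hb
        apply Finset.le_sup'
        simp only [Finset.mem_Icc] at hb ⊢
        omega
      have hdmem : δ (n+1) ≤ (Finset.Icc 1 (n+1)).sup' (Finset.nonempty_Icc.mpr ht) δ := by
        apply Finset.le_sup'
        simp
      by_cases hc : 1 + δ (n+1) < A (n+1)
      · have he := hup (n+1) ht hc
        have := hupd (n+1) ht
        rw [he] at this
        have hAle : A (n+1+1) ≤ A (n+1) := by
          rw [this]; nlinarith [hα.2, hη.le]
        linarith
      · push_neg at hc
        have := hstep (n+1) ht
        linarith
end

section
/- (Boundedness of α_t, Lemma 1 of the paper.) Under the ACI-with-radius update rule with initial threshold A_1 = α, a nondecreasing radius sequence, and both the lower- and upper-saturation hypotheses, for every t ≥ 1 the calibration threshold satisfies A_{t+1} ∈ [−η − δ_t, 1 + η + δ_t]. -/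
/-- Boundedness of the calibration threshold (Lemma 1): with `A 1 = α`,
a nondecreasing radius sequence, and both saturation hypotheses,
`A (t+1) ∈ [-η - δ t, 1 + η + δ t]` for every `t ≥ 1`. -/
theorem aci_threshold_bounded
    (η α : ℝ) (err A δ : ℕ → ℝ)
    (hη : 0 < η) (hα : α ∈ Set.Icc (0 : ℝ) 1)
    (hδ : ∀ t, 1 ≤ t → 0 ≤ δ t)
    (hδmono : Monotone δ)
    (herr : ∀ t, 1 ≤ t → err t = 0 ∨ err t = 1)
    (hinit : A 1 = α)
    (hupd : ∀ t, 1 ≤ t → A (t + 1) = A t + η * (α - err t))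
    (hlow : ∀ t, 1 ≤ t → A t < -δ t → err t = 0)
    (hup : ∀ t, 1 ≤ t → 1 + δ t < A t → err t = 1) :
    ∀ t, 1 ≤ t → A (t + 1) ∈ Set.Icc (-η - δ t) (1 + η + δ t) := by
  obtain ⟨hα0, hα1⟩ := hα
  -- step lemma: membership propagates
  have step : ∀ t, 1 ≤ t → A t ∈ Set.Icc (-η - δ t) (1 + η + δ t) →
      A (t + 1) ∈ Set.Icc (-η - δ t) (1 + η + δ t) := by
    intro t ht ⟨hlo, hhi⟩
    have hδt := hδ t ht
    have hupd' := hupd t ht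
    rcases lt_or_ge (A t) (-δ t) with h1 | h1
    · have he := hlow t ht h1
      rw [hupd', he]
      constructor
      · nlinarith
      · nlinarith
    · rcases lt_or_ge (1 + δ t) (A t) with h2 | h2
      · have he := hup t ht h2
        rw [hupd', he]
        constructor
        · nlinarith
        · nlinarith
      · rcases herr t ht with he | he <;> rw [hupd', he] <;> constructor <;> nlinarith
  -- main induction
  intro t ht
  induction t with
  | zero => omega
  | succ n ih =>
    rcases Nat.eq_or_lt_of_le ht with h | h
    · -- n + 1 = 1, i.e. n = 0, t = 1
      have hn : n = 0 := by omega
      subst hn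
      apply step 1 le_rfl
      rw [hinit]
      have := hδ 1 le_rfl
      exact ⟨by nlinarith, by nlinarith⟩
    · have hn : 1 ≤ n := by omega
      have prev := ih hn
      have hδle : δ n ≤ δ (n + 1) := hδmono (Nat.le_succ n)
      apply step (n + 1) (by omega)
      obtain ⟨plo, phi⟩ := prev
      constructor <;> simp at * <;> linarith
end

section
/- (Finite-sample long-term coverage bound.) Under the ACI-with-radius update rule with initial threshold A_1 = α, a nondecreasing radius sequence, and both the lower- and upper-saturation hypotheses, for every T ≥ 1 the empirical miscoverage gap satisfies |(1/T) · Σ_{t=1}^{T} (α − err_t)| ≤ (max{α, 1−α} + η + δ_T) / (T·η). -/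
/-- Finite-sample long-term coverage bound: under the ACI-with-radius update
with `A 1 = α`, a nondecreasing radius sequence, and both saturation
hypotheses, the empirical miscoverage gap satisfies
`|(1/T) ∑_{t=1}^{T} (α - err t)| ≤ (max α (1-α) + η + δ T) / (T η)`. -/
theorem aci_coverage_bound
    (η α : ℝ) (err A δ : ℕ → ℝ)
    (hη : 0 < η) (hα : α ∈ Set.Icc (0 : ℝ) 1)
    (hδ : ∀ t, 1 ≤ t → 0 ≤ δ t)
    (hδmono : Monotone δ)
    (herr : ∀ t, 1 ≤ t → err t = 0 ∨ err t = 1)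
    (hinit : A 1 = α)
    (hupd : ∀ t, 1 ≤ t → A (t + 1) = A t + η * (α - err t))
    (hlow : ∀ t, 1 ≤ t → A t < -δ t → err t = 0)
    (hup : ∀ t, 1 ≤ t → 1 + δ t < A t → err t = 1) :
    ∀ T : ℕ, 1 ≤ T →
      |(1 / (T : ℝ)) * ∑ t ∈ Finset.Icc 1 T, (α - err t)| ≤
        (max α (1 - α) + η + δ T) / ((T : ℝ) * η) := by
  obtain ⟨hα0, hα1⟩ := hα
  -- telescoping sum
  have hsum : ∀ T : ℕ, η * ∑ t ∈ Finset.Icc 1 T, (α - err t) = A (T + 1) - A 1 := by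
    intro T
    induction T with
    | zero => simp
    | succ n ih =>
      rw [Finset.sum_Icc_succ_top (by omega : 1 ≤ n + 1), mul_add, ih,
        hupd (n + 1) (by omega)]
      ring
  -- step bound: for t ≥ 1, if A t is within the invariant band at time t,
  -- then A (t+1) is within the band at time t (hence also at t+1 by monotonicity).
  have hstep : ∀ t : ℕ, 1 ≤ t → -δ t - η ≤ A t → A t ≤ 1 + δ t + η →
      -δ t - η ≤ A (t + 1) ∧ A (t + 1) ≤ 1 + δ t + η := by
    intro t ht hlo hhi
    have hδt := hδ t ht
    rw [hupd t ht]
    rcases herr t ht with he | he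
    · -- err = 0, so update increases by η α; need A t ≤ 1 + δ t to keep upper bound
      have hAle : A t ≤ 1 + δ t := by
        by_contra h
        push_neg at h
        have := hup t ht h
        rw [this] at he; norm_num at he
      constructor
      · rw [he]; nlinarith
      · rw [he]; nlinarith
    · -- err = 1, update decreases by η(1-α); need A t ≥ -δ t to keep lower bound
      have hAge : -δ t ≤ A t := by
        by_contra h
        push_neg at h
        have := hlow t ht h
        rw [this] at he; norm_num at he
      constructor
      · rw [he]; nlinarith
      · rw [he]; nlinarith
  -- invariant: for t ≥ 1, -δ t - η ≤ A (t+1) ≤ 1 + δ t + η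
  have hinv : ∀ t : ℕ, 1 ≤ t → -δ t - η ≤ A (t + 1) ∧ A (t + 1) ≤ 1 + δ t + η := by
    intro t ht
    induction t with
    | zero => omega
    | succ n ih =>
      rcases Nat.eq_or_lt_of_le ht with h1 | h1
      · -- n + 1 = 1
        have hn : n = 0 := by omega
        subst hn
        have hδ1 := hδ 1 le_rfl
        exact hstep 1 le_rfl (by rw [hinit]; linarith) (by rw [hinit]; linarith)
      · have hn : 1 ≤ n := by omega
        obtain ⟨ihl, ihr⟩ := ih hn
        have hmono : δ n ≤ δ (n + 1) := hδmono (by omega)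
        exact hstep (n + 1) (by omega) (by linarith) (by linarith)
  intro T hT
  have hTpos : (0 : ℝ) < T := by exact_mod_cast hT
  obtain ⟨hl, hr⟩ := hinv T hT
  have hS : ∑ t ∈ Finset.Icc 1 T, (α - err t) = (A (T + 1) - α) / η := by
    have h := hsum T
    rw [hinit] at h
    rw [eq_div_iff (ne_of_gt hη), mul_comm]
    exact h
  have hδT := hδ T hT
  have hmax1 : 1 - α ≤ max α (1 - α) := le_max_right _ _
  have hmax2 : α ≤ max α (1 - α) := le_max_left _ _
  have habs : |A (T + 1) - α| ≤ max α (1 - α) + η + δ T := by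
    rw [abs_le]
    constructor <;> nlinarith
  have heq : |(1 / (T : ℝ)) * ((A (T + 1) - α) / η)| = |A (T + 1) - α| / ((T : ℝ) * η) := by
    rw [abs_mul, abs_div, abs_div, abs_one, abs_of_pos hη, abs_of_pos hTpos]
    field_simp
  rw [hS, heq]
  gcongr
end

section
/- (Theorem 1, long-term coverage of the ACI-with-radius update.) Under the ACI-with-radius update rule with initial threshold A_1 = α, both the lower- and upper-saturation hypotheses, and a sublinear radius sequence (δ_t / t → 0 as t → ∞), the empirical miscoverage frequency converges to the target rate: (1/T) · Σ_{t=1}^{T} err_t → α as T → ∞. -/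
open Filter Finset

noncomputable def runMax (δ : ℕ → ℝ) : ℕ → ℝ
  | 0 => 0
  | n + 1 => max (runMax δ n) (δ (n + 1))

lemma runMax_nonneg (δ : ℕ → ℝ) : ∀ n, 0 ≤ runMax δ n
  | 0 => le_refl 0
  | n + 1 => le_trans (runMax_nonneg δ n) (le_max_left _ _)

lemma runMax_mono (δ : ℕ → ℝ) (n : ℕ) : runMax δ n ≤ runMax δ (n + 1) :=
  le_max_left _ _

lemma le_runMax (δ : ℕ → ℝ) (n : ℕ) (hn : 1 ≤ n) : δ n ≤ runMax δ n := by
  cases n with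
  | zero => omega
  | succ m => exact le_max_right _ _

lemma runMax_tendsto (δ : ℕ → ℝ) (hδ : ∀ t, 1 ≤ t → 0 ≤ δ t)
    (h : Tendsto (fun t : ℕ => δ t / (t : ℝ)) atTop (nhds 0)) :
    Tendsto (fun t : ℕ => runMax δ t / (t : ℝ)) atTop (nhds 0) := by
  rw [Metric.tendsto_atTop] at h ⊢
  intro ε hε
  obtain ⟨N₁, hN₁⟩ := h (ε / 2) (by linarith)
  set N := max N₁ 1 with hNdef
  have hsmall : ∀ t, N ≤ t → δ t ≤ ε / 2 * t := by
    intro t ht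
    have h1 : 1 ≤ t := le_trans (le_max_right _ _) ht
    have ht0 : (0 : ℝ) < t := by exact_mod_cast h1
    have := hN₁ t (le_trans (le_max_left _ _) ht)
    rw [Real.dist_eq, sub_zero,
      abs_of_nonneg (div_nonneg (hδ t h1) ht0.le)] at this
    have := (div_lt_iff₀ ht0).mp this
    linarith
  have hbound : ∀ t, N ≤ t → runMax δ t ≤ runMax δ N + ε / 2 * t := by
    intro t ht
    induction t, ht using Nat.le_induction with
    | base =>
      have : (0 : ℝ) ≤ (N : ℝ) := by positivity
      nlinarith
    | succ n hn ih =>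
      have h1 : δ (n + 1) ≤ ε / 2 * ((n : ℝ) + 1) := by
        have := hsmall (n + 1) (by omega)
        push_cast at this ⊢; linarith
      have hM : 0 ≤ runMax δ N := runMax_nonneg δ N
      have hrec : runMax δ (n + 1) = max (runMax δ n) (δ (n + 1)) := rfl
      rw [hrec]
      push_cast
      apply max_le
      · nlinarith
      · nlinarith
  obtain ⟨N₂, hN₂⟩ := (Metric.tendsto_atTop.mp
    (tendsto_const_div_atTop_nhds_zero_nat (runMax δ N))) (ε / 2) (by linarith)
  refine ⟨max N N₂ + 1, fun t ht => ?_⟩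
  have htN : N ≤ t := by omega
  have ht1 : 1 ≤ t := by
    have : 1 ≤ N := le_max_right _ _
    omega
  have ht0 : (0 : ℝ) < t := by exact_mod_cast ht1
  have h2 := hN₂ t (by omega)
  rw [Real.dist_eq, sub_zero,
    abs_of_nonneg (div_nonneg (runMax_nonneg δ N) ht0.le)] at h2
  rw [Real.dist_eq, sub_zero,
    abs_of_nonneg (div_nonneg (runMax_nonneg δ t) ht0.le)]
  have hb := hbound t htN
  have key : runMax δ t / t ≤ runMax δ N / t + ε / 2 := by
    rw [div_le_iff₀ ht0]
    have : (runMax δ N / t) * t = runMax δ N := by field_simp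
    nlinarith
  linarith

/-- Theorem 1 (long-term coverage of the ACI-with-radius update):
with `A 1 = α`, both saturation hypotheses, and a sublinear radius sequence,
the empirical miscoverage frequency converges to the target rate `α`. -/
theorem aci_long_term_coverage
    (η α : ℝ) (err A δ : ℕ → ℝ)
    (hη : 0 < η) (hα : α ∈ Set.Icc (0 : ℝ) 1)
    (hδ : ∀ t, 1 ≤ t → 0 ≤ δ t)
    (hδsub : Filter.Tendsto (fun t : ℕ => δ t / (t : ℝ)) Filter.atTop (nhds 0))
    (herr : ∀ t, 1 ≤ t → err t = 0 ∨ err t = 1)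
    (hinit : A 1 = α)
    (hupd : ∀ t, 1 ≤ t → A (t + 1) = A t + η * (α - err t))
    (hlow : ∀ t, 1 ≤ t → A t < -δ t → err t = 0)
    (hup : ∀ t, 1 ≤ t → 1 + δ t < A t → err t = 1) :
    Filter.Tendsto
      (fun T : ℕ => (∑ t ∈ Finset.Icc 1 T, err t) / (T : ℝ))
      Filter.atTop (nhds α) := by
  obtain ⟨hα0, hα1⟩ := hα
  -- telescoping identity
  have telesc : ∀ T : ℕ, A (T + 1) = α + η * (α * T - ∑ t ∈ Finset.Icc 1 T, err t) := by
    intro T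
    induction T with
    | zero => simp [hinit]
    | succ n ih =>
      rw [hupd (n + 1) (by omega), ih, Finset.sum_Icc_succ_top (by omega : 1 ≤ n + 1)]
      push_cast; ring
  -- bounds on A via the running max of δ
  have bdd : ∀ T : ℕ, -(runMax δ T + η) ≤ A (T + 1) ∧ A (T + 1) ≤ 1 + runMax δ T + η := by
    intro T
    induction T with
    | zero =>
      constructor
      · simp only [runMax]; rw [hinit]; linarith
      · simp only [runMax]; rw [hinit]; linarith
    | succ n ih =>
      obtain ⟨ihl, ihr⟩ := ih
      have hu := hupd (n + 1) (by omega)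
      have he := herr (n + 1) (by omega)
      have herr0 : 0 ≤ err (n + 1) := by rcases he with h | h <;> rw [h] <;> norm_num
      have herr1 : err (n + 1) ≤ 1 := by rcases he with h | h <;> rw [h] <;> norm_num
      have hmono := runMax_mono δ n
      have hle := le_runMax δ (n + 1) (by omega)
      constructor
      · by_cases hc : A (n + 1) < -δ (n + 1)
        · have h0 := hlow (n + 1) (by omega) hc
          rw [hu, h0]
          nlinarith
        · push_neg at hc
          rw [hu]; nlinarith
      · by_cases hc : 1 + δ (n + 1) < A (n + 1)
        · have h1 := hup (n + 1) (by omega) hc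
          rw [hu, h1]
          nlinarith
        · push_neg at hc
          rw [hu]; nlinarith
  -- the difference from α tends to zero
  have hdiff : Tendsto
      (fun T : ℕ => (∑ t ∈ Finset.Icc 1 T, err t) / (T : ℝ) - α) atTop (nhds 0) := by
    have hg : Tendsto
        (fun T : ℕ => (1 / η) * ((1 + η) / (T : ℝ) + runMax δ T / (T : ℝ)))
        atTop (nhds 0) := by
      have h1 := tendsto_const_div_atTop_nhds_zero_nat (1 + η)
      have h2 := runMax_tendsto δ hδ hδsub
      have := (h1.add h2).const_mul (1 / η)
      simpa using this
    apply squeeze_zero_norm' _ hg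
    filter_upwards [eventually_ge_atTop 1] with T hT
    have hT0 : (0 : ℝ) < T := by exact_mod_cast hT
    obtain ⟨hl, hr⟩ := bdd T
    have hMnn := runMax_nonneg δ T
    have heq : (∑ t ∈ Finset.Icc 1 T, err t) / (T : ℝ) - α = (α - A (T + 1)) / (η * T) := by
      rw [telesc T]
      field_simp
      ring
    rw [heq, Real.norm_eq_abs]
    rw [abs_div, abs_of_pos (by positivity : (0 : ℝ) < η * T)]
    rw [div_le_iff₀ (by positivity : (0 : ℝ) < η * T)]
    have habs : |α - A (T + 1)| ≤ 1 + η + runMax δ T := by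
      rw [abs_le]; constructor <;> nlinarith
    have hrhs : (1 / η) * ((1 + η) / (T : ℝ) + runMax δ T / (T : ℝ)) * (η * T)
        = 1 + η + runMax δ T := by field_simp
    rw [hrhs]; exact habs
  have := hdiff.add_const α
  simpa using this
end

section
/- (Theorem 1, validity of arbitrarily selected thresholds in the candidate interval.) Fix a learning rate η > 0, a target miscoverage rate α ∈ [0,1], a nonnegative sublinear radius sequence δ (δ_t / t → 0), a binary error sequence err with err_t ∈ {0,1}, and a selected-threshold sequence α* : ℕ → ℝ with |α*_t − A_t| ≤ δ_t for all t ≥ 1, where A is the calibration-threshold sequence with A_1 = α and A_{t+1} = A_t + η(α − err_t). If moreover err_t = 0 whenever α*_t < 0 and err_t = 1 whenever α*_t > 1, then the empirical miscoverage frequency converges to the target rate: (1/T) · Σ_{t=1}^{T} err_t → α as T → ∞. -/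
open Filter Finset

/-- Running maximum of `δ` over indices `1..n` (with value `0` at `n = 0`). -/
noncomputable def aciRunMax (δ : ℕ → ℝ) : ℕ → ℝ
  | 0 => 0
  | n + 1 => max (aciRunMax δ n) (δ (n + 1))

lemma aciRunMax_mono (δ : ℕ → ℝ) : Monotone (aciRunMax δ) := by
  apply monotone_nat_of_le_succ
  intro n
  exact le_max_left _ _

lemma aciRunMax_nonneg (δ : ℕ → ℝ) (n : ℕ) : 0 ≤ aciRunMax δ n := by
  have := aciRunMax_mono δ (Nat.zero_le n)
  simpa [aciRunMax] using this

lemma le_aciRunMax (δ : ℕ → ℝ) (n : ℕ) : δ (n + 1) ≤ aciRunMax δ (n + 1) :=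
  le_max_right _ _

lemma aciRunMax_tendsto (δ : ℕ → ℝ) (hδ : ∀ t, 1 ≤ t → 0 ≤ δ t)
    (h : Tendsto (fun t : ℕ => δ t / (t : ℝ)) atTop (nhds 0)) :
    Tendsto (fun t : ℕ => aciRunMax δ t / (t : ℝ)) atTop (nhds 0) := by
  rw [Metric.tendsto_atTop]
  intro ε hε
  obtain ⟨N, hN⟩ := (Metric.tendsto_atTop.mp h) (ε / 2) (by positivity)
  set N1 := max N 1 with hN1def
  have hδlt : ∀ t, N1 ≤ t → δ t ≤ ε / 2 * t := by
    intro t ht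
    have h1 : 1 ≤ t := le_trans (le_max_right _ _) ht
    have htpos : (0 : ℝ) < t := by exact_mod_cast h1
    have := hN t (le_trans (le_max_left _ _) ht)
    rw [Real.dist_eq, sub_zero, abs_div, abs_of_nonneg (hδ t h1),
      abs_of_pos htpos, div_lt_iff₀ htpos] at this
    linarith
  have hMbound : ∀ t, N1 ≤ t → aciRunMax δ t ≤ max (aciRunMax δ N1) (ε / 2 * t) := by
    intro t ht
    induction t, ht using Nat.le_induction with
    | base => exact le_max_left _ _
    | succ n hn ih =>
      have h1 : δ (n + 1) ≤ ε / 2 * (n + 1) := by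
        have := hδlt (n + 1) (le_trans hn (Nat.le_succ n))
        exact_mod_cast this
      have h2 : ε / 2 * n ≤ ε / 2 * (n + 1) := by nlinarith
      have hgoal : max (aciRunMax δ n) (δ (n + 1)) ≤ max (aciRunMax δ N1) (ε / 2 * ((n : ℝ) + 1)) := by
        refine max_le (le_trans ih (max_le (le_max_left _ _) ?_)) ?_
        · exact le_trans h2 (le_max_right _ _)
        · exact le_trans h1 (le_max_right _ _)
      show max (aciRunMax δ n) (δ (n + 1)) ≤ _
      push_cast
      exact hgoal
  obtain ⟨N2, hN2⟩ := exists_nat_ge (2 * aciRunMax δ N1 / ε)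
  refine ⟨max N1 N2, fun n hn => ?_⟩
  have hn1 : N1 ≤ n := le_trans (le_max_left _ _) hn
  have hn2 : (N2 : ℝ) ≤ n := by exact_mod_cast le_trans (le_max_right _ _) hn
  have h1 : 1 ≤ n := le_trans (le_max_right _ _) hn1
  have hnpos : (0 : ℝ) < n := by exact_mod_cast h1
  have hA : aciRunMax δ N1 ≤ ε / 2 * n := by
    rw [div_le_iff₀ hε] at hN2
    nlinarith
  have hMn : aciRunMax δ n ≤ ε / 2 * n :=
    le_trans (hMbound n hn1) (max_le hA le_rfl)
  rw [Real.dist_eq, sub_zero, abs_of_nonneg (div_nonneg (aciRunMax_nonneg δ n) hnpos.le),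
    div_lt_iff₀ hnpos]
  nlinarith

/-- Theorem 1 (validity of arbitrarily selected thresholds in the candidate
interval): if the selected thresholds `α*` stay within radius `δ t` of the
ACI iterates `A t`, the radius is sublinear, and the prediction-set
saturation conditions hold for `α*` (`err t = 0` when `α* t < 0`,
`err t = 1` when `α* t > 1`), then the empirical miscoverage frequency
converges to the target rate `α`. -/
theorem aci_selected_threshold_coverage
    (η α : ℝ) (err A δ αstar : ℕ → ℝ)
    (hη : 0 < η) (hα : α ∈ Set.Icc (0 : ℝ) 1)
    (hδ : ∀ t, 1 ≤ t → 0 ≤ δ t)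
    (hδsub : Filter.Tendsto (fun t : ℕ => δ t / (t : ℝ)) Filter.atTop (nhds 0))
    (herr : ∀ t, 1 ≤ t → err t = 0 ∨ err t = 1)
    (hinit : A 1 = α)
    (hupd : ∀ t, 1 ≤ t → A (t + 1) = A t + η * (α - err t))
    (hsel : ∀ t, 1 ≤ t → |αstar t - A t| ≤ δ t)
    (hlow : ∀ t, 1 ≤ t → αstar t < 0 → err t = 0)
    (hup : ∀ t, 1 ≤ t → 1 < αstar t → err t = 1) :
    Filter.Tendsto
      (fun T : ℕ => (∑ t ∈ Finset.Icc 1 T, err t) / (T : ℝ))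
      Filter.atTop (nhds α) := by
  obtain ⟨hα0, hα1⟩ := hα
  set M := aciRunMax δ with hM
  -- key telescoping identity
  have key : ∀ T : ℕ, A (T + 1) = α + η * (T * α - ∑ t ∈ Finset.Icc 1 T, err t) := by
    intro T
    induction T with
    | zero => simp [hinit]
    | succ T ih =>
      rw [hupd (T + 1) (Nat.le_add_left 1 T), ih,
        Finset.sum_Icc_succ_top (Nat.le_add_left 1 T)]
      push_cast
      ring
  -- boundedness of the iterates
  have habs : ∀ t : ℕ, |A (t + 1)| ≤ 1 + η + M t := by
    intro t
    induction t with
    | zero =>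
      rw [hinit, abs_of_nonneg hα0]
      have : M 0 = 0 := rfl
      linarith
    | succ t ih =>
      set s := t + 1 with hs
      have hs1 : 1 ≤ s := Nat.le_add_left 1 t
      have herr0 : 0 ≤ err s ∧ err s ≤ 1 := by
        rcases herr s hs1 with h | h <;> simp [h]
      have hMts : M t ≤ M s := aciRunMax_mono δ (Nat.le_succ t)
      have hδM : δ s ≤ M s := le_aciRunMax δ t
      have hδ0 : 0 ≤ δ s := hδ s hs1
      have hAup : A (s + 1) ≤ 1 + η + M s := by
        rcases le_or_gt (αstar s) 1 with hcase | hcase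
        · have hAs : A s ≤ 1 + δ s := by
            have := abs_le.mp (hsel s hs1)
            linarith [this.1]
          rw [hupd s hs1]
          nlinarith [herr0.1]
        · have he1 : err s = 1 := hup s hs1 hcase
          rw [hupd s hs1, he1]
          have := abs_le.mp ih
          nlinarith [this.2, aciRunMax_nonneg δ s]
      have hAlo : -(1 + η + M s) ≤ A (s + 1) := by
        rcases lt_or_ge (αstar s) 0 with hcase | hcase
        · have he0 : err s = 0 := hlow s hs1 hcase
          rw [hupd s hs1, he0]
          have := abs_le.mp ih
          nlinarith [this.1]
        · have hAs : -δ s ≤ A s := by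
            have := abs_le.mp (hsel s hs1)
            linarith [this.2]
          rw [hupd s hs1]
          nlinarith [herr0.2]
      exact abs_le.mpr ⟨hAlo, hAup⟩
  -- the difference tends to zero
  have hdiff : Tendsto (fun T : ℕ => (∑ t ∈ Finset.Icc 1 T, err t) / (T : ℝ) - α)
      atTop (nhds 0) := by
    have hg : Tendsto (fun T : ℕ => (2 + η) / (η * T) + M T / T / η) atTop (nhds 0) := by
      have h1 : Tendsto (fun T : ℕ => (2 + η) / (η * T)) atTop (nhds 0) := by
        have hb : Tendsto (fun T : ℕ => η * (T : ℝ)) atTop atTop :=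
          (tendsto_natCast_atTop_atTop (R := ℝ)).const_mul_atTop hη
        exact hb.const_div_atTop (2 + η)
      have h2 : Tendsto (fun T : ℕ => M T / T / η) atTop (nhds 0) := by
        have := (aciRunMax_tendsto δ hδ hδsub).div_const η
        simpa using this
      simpa using h1.add h2
    apply squeeze_zero_norm' _ hg
    filter_upwards [eventually_ge_atTop 1] with T hT
    have hTpos : (0 : ℝ) < T := by exact_mod_cast hT
    have hkey := key T
    have hsum : (∑ t ∈ Finset.Icc 1 T, err t) = T * α - (A (T + 1) - α) / η := by
      field_simp at hkey ⊢
      linarith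
    have hb' := abs_le.mp (habs T)
    have hMnn := aciRunMax_nonneg δ T
    have heq : (∑ t ∈ Finset.Icc 1 T, err t) / (T : ℝ) - α = (α - A (T + 1)) / (η * T) := by
      rw [hkey]
      field_simp
      ring
    have hnum : |α - A (T + 1)| ≤ 2 + η + M T := by
      rw [abs_le]
      constructor <;> nlinarith [hb'.1, hb'.2]
    have hsplit : (2 + η + M T) / (η * T) = (2 + η) / (η * T) + M T / T / η := by
      field_simp
    rw [heq, Real.norm_eq_abs, abs_div, abs_of_pos (by positivity : (0:ℝ) < η * T),
      ← hsplit]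
    gcongr
  have := hdiff.add_const α
  simpa using this
end
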